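/- (Proposition 1 for mCS, attention-based case) The composition of the multiple cross-similarity mCS with the attention-based cross-set transformation is both symmetric and permutation invariant: for every N, M, d, d_g, d_w, h : ℕ, all Θ₁, Θ₂, Θ₃ : Matrix (Fin d_g) (Fin d) ℝ, every family W : Fin h → Matrix (Fin d_w) (Fin d_g) ℝ and output weights w_o : Fin h → ℝ, the function F(X, Y) := mCS(g_att(X, Y), g_att(Y, X)) satisfies (i) F(X, Y) = F(Y, X) for all X, Y : Fin N → (Fin d → ℝ) (taking M = N), and (ii) F(X ∘ π, Y ∘ σ) = F(X, Y) for all X : Fin N → (Fin d → ℝ), Y : Fin M → (Fin d → ℝ), π : Equiv.Perm (Fin N), σ : Equiv.Perm (Fin M). -/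

import Mathlib

/-!
The cross-similarity is a double average of a quantity symmetric in its two vectors, so it is
symmetric and unchanged when either tuple is permuted. The attention map is computed pointwise in
its first argument and averages over its second, hence is equivariant in the first and invariant
in the second: permuting `X` and `Y` just permutes the two tuples that `mCS` compares.
-/

open Matrix

/-- The cross-similarity of two tuples of feature vectors. -/
noncomputable def CS {N M d dw : ℕ} (W : Matrix (Fin dw) (Fin d) ℝ)
    (X : Fin N → Fin d → ℝ) (Y : Fin M → Fin d → ℝ) : ℝ :=
  (1 / ((N : ℝ) * M)) * ∑ n : Fin N, ∑ m : Fin M,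
    max 0 ((W.mulVec (X n) ⬝ᵥ W.mulVec (Y m)) / Real.sqrt dw)

/-- The multiple cross-similarity: a weighted combination of cross-similarities
computed with different weight matrices. -/
noncomputable def mCS {N M d dw h : ℕ} (W : Fin h → Matrix (Fin dw) (Fin d) ℝ)
    (wo : Fin h → ℝ) (X : Fin N → Fin d → ℝ) (Y : Fin M → Fin d → ℝ) : ℝ :=
  ∑ j : Fin h, wo j * CS (W j) X Y

/-- The attention-based cross-set map. -/
noncomputable def gAtt {N M e dg : ℕ} (Θ₁ Θ₂ Θ₃ : Matrix (Fin dg) (Fin e) ℝ)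
    (X : Fin N → Fin e → ℝ) (Y : Fin M → Fin e → ℝ) : Fin N → Fin dg → ℝ :=
  fun n => (1 / (M : ℝ)) • ∑ m : Fin M,
    max 0 ((Θ₁.mulVec (X n) ⬝ᵥ Θ₂.mulVec (Y m)) / Real.sqrt dg) • Θ₃.mulVec (Y m)

section CrossSimilarity

variable {N M d dw h : ℕ}

theorem CS_comm (W : Matrix (Fin dw) (Fin d) ℝ) (X Y : Fin N → Fin d → ℝ) :
    CS W X Y = CS W Y X := by
  unfold CS
  rw [Finset.sum_comm]
  simp only [dotProduct_comm]

theorem CS_comp_perm (W : Matrix (Fin dw) (Fin d) ℝ) (X : Fin N → Fin d → ℝ)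
    (Y : Fin M → Fin d → ℝ) (π : Equiv.Perm (Fin N)) (σ : Equiv.Perm (Fin M)) :
    CS W (X ∘ π) (Y ∘ σ) = CS W X Y := by
  unfold CS
  congr 1
  exact Fintype.sum_equiv π _ _ fun _ => Fintype.sum_equiv σ _ _ fun _ => rfl

theorem mCS_comm (W : Fin h → Matrix (Fin dw) (Fin d) ℝ) (wo : Fin h → ℝ)
    (X Y : Fin N → Fin d → ℝ) : mCS W wo X Y = mCS W wo Y X := by
  simp only [mCS, CS_comm _ X Y]

theorem mCS_comp_perm (W : Fin h → Matrix (Fin dw) (Fin d) ℝ) (wo : Fin h → ℝ)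
    (X : Fin N → Fin d → ℝ) (Y : Fin M → Fin d → ℝ)
    (π : Equiv.Perm (Fin N)) (σ : Equiv.Perm (Fin M)) :
    mCS W wo (X ∘ π) (Y ∘ σ) = mCS W wo X Y := by
  simp only [mCS, CS_comp_perm]

end CrossSimilarity

theorem gAtt_comp {N N' M e dg : ℕ} (Θ₁ Θ₂ Θ₃ : Matrix (Fin dg) (Fin e) ℝ)
    (X : Fin N → Fin e → ℝ) (Y : Fin M → Fin e → ℝ) (f : Fin N' → Fin N)
    (σ : Equiv.Perm (Fin M)) :
    gAtt Θ₁ Θ₂ Θ₃ (X ∘ f) (Y ∘ σ) = gAtt Θ₁ Θ₂ Θ₃ X Y ∘ f := by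
  funext n
  unfold gAtt
  congr 1
  exact Fintype.sum_equiv σ _ _ fun _ => rfl

/-- The composition of mCS with the attention-based cross-set transformation
(with shared weights) is symmetric (taking M = N) and permutation invariant. -/
theorem mCS_gAtt_symm_and_perm_invariant (N M d dg dw h : ℕ)
    (Θ₁ Θ₂ Θ₃ : Matrix (Fin dg) (Fin d) ℝ)
    (W : Fin h → Matrix (Fin dw) (Fin dg) ℝ) (wo : Fin h → ℝ) :
    (∀ X Y : Fin N → Fin d → ℝ,
      mCS W wo (gAtt Θ₁ Θ₂ Θ₃ X Y) (gAtt Θ₁ Θ₂ Θ₃ Y X)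
        = mCS W wo (gAtt Θ₁ Θ₂ Θ₃ Y X) (gAtt Θ₁ Θ₂ Θ₃ X Y)) ∧
    (∀ (X : Fin N → Fin d → ℝ) (Y : Fin M → Fin d → ℝ)
      (π : Equiv.Perm (Fin N)) (σ : Equiv.Perm (Fin M)),
      mCS W wo (gAtt Θ₁ Θ₂ Θ₃ (X ∘ π) (Y ∘ σ)) (gAtt Θ₁ Θ₂ Θ₃ (Y ∘ σ) (X ∘ π))
        = mCS W wo (gAtt Θ₁ Θ₂ Θ₃ X Y) (gAtt Θ₁ Θ₂ Θ₃ Y X)) := by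
  refine ⟨fun X Y => mCS_comm W wo _ _, fun X Y π σ => ?_⟩
  rw [gAtt_comp, gAtt_comp, mCS_comp_perm]
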